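/- Iterated MGF bound with constant parameters: suppose (V_t), (U_t), (X_t) are scalar processes on a filtered probability space satisfying V_{t+1} ≤ α V_t + U_t √(V_t) + X_t for a constant α ∈ [0,1), where V_t is nonnegative and H_t-measurable with V_0 deterministic, U_t is mean-zero sub-Gaussian conditioned on H_t with parameter σ (E[exp(λU_t)|H_t] ≤ exp(λ²σ²/2) for all λ ∈ ℝ), and X_t is nonnegative and sub-exponential conditioned on H_t with parameter ν (E[exp(λX_t)|H_t] ≤ exp(λν) for λ ∈ [0,1/ν]). Then for every t ≥ 1 and every λ with 0 ≤ λ ≤ min((1 − α)/(2σ²), 1/(2ν)), E[exp(λ V_t)] ≤ exp(λ(((1 + α)/2)^t V_0 + ν Σ_{i=0}^{t−1} ((1 + α)/2)^i)), and in particular E[exp(λ V_t)] ≤ exp(λ(((1 + α)/2)^t V_0 + 2ν/(1 − α))). -/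

import Mathlib

open MeasureTheory Filter

open scoped ENNReal

namespace IteratedMGFAux

/-- Set-lintegral bound deduced from a conditional bound. -/
lemma setLIntegral_le_of_condexp_le {Ω : Type*} {m m0 : MeasurableSpace Ω}
    {P : Measure Ω} [IsProbabilityMeasure P] (hm : m ≤ m0) {f : Ω → ℝ}
    (hf0 : ∀ ω, 0 ≤ f ω) (hint : Integrable f P) {c : ℝ} (hc : 0 ≤ c)
    (hcond : P[f|m] ≤ᵐ[P] fun _ => c) {B : Set Ω} (hB : MeasurableSet[m] B) :
    ∫⁻ ω in B, ENNReal.ofReal (f ω) ∂P ≤ ENNReal.ofReal c * P B := by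
  have h1 : ∫⁻ ω in B, ENNReal.ofReal (f ω) ∂P = ENNReal.ofReal (∫ ω in B, f ω ∂P) :=
    (ofReal_integral_eq_lintegral_ofReal hint.restrict (Eventually.of_forall hf0)).symm
  rw [h1, ← setIntegral_condExp hm hint hB]
  have h2 : ∫ ω in B, (P[f|m]) ω ∂P ≤ ∫ ω in B, c ∂P :=
    integral_mono_ae integrable_condExp.restrict (integrable_const c) (ae_restrict_of_ae hcond)
  rw [setIntegral_const] at h2
  calc ENNReal.ofReal (∫ ω in B, (P[f|m]) ω ∂P) ≤ ENNReal.ofReal ((P B).toReal • c) :=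
        ENNReal.ofReal_le_ofReal h2
    _ = ENNReal.ofReal c * P B := by
        rw [smul_eq_mul, mul_comm, ENNReal.ofReal_mul hc,
          ENNReal.ofReal_toReal (measure_ne_top P B)]

/-- Decomposition of a lintegral over the fibers of a simple function measurable w.r.t. a
sub-σ-algebra. -/
lemma lintegral_eq_sum_fibers {Ω : Type*} {m m0 : MeasurableSpace Ω}
    {P : Measure Ω} [IsProbabilityMeasure P] (hm : m ≤ m0)
    (s : @SimpleFunc Ω m ℝ≥0∞) {h : Ω → ℝ≥0∞} (hh : AEMeasurable h P) :
    ∫⁻ ω, h ω ∂P = ∑ c ∈ @SimpleFunc.range Ω ℝ≥0∞ m s, ∫⁻ ω in s ⁻¹' {c}, h ω ∂P := by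
  have hfib : ∀ c, MeasurableSet (s ⁻¹' {c}) :=
    fun c => hm _ (@SimpleFunc.measurableSet_fiber Ω ℝ≥0∞ m s c)
  have hpt : ∀ ω, h ω = ∑ c ∈ @SimpleFunc.range Ω ℝ≥0∞ m s, (s ⁻¹' {c}).indicator h ω := by
    intro ω
    have h1 : ∑ c ∈ @SimpleFunc.range Ω ℝ≥0∞ m s, (s ⁻¹' {c}).indicator h ω
        = (s ⁻¹' {s ω}).indicator h ω := by
      refine Finset.sum_eq_single_of_mem _ (@SimpleFunc.mem_range_self Ω ℝ≥0∞ m s ω) ?_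
      intro b _ hne
      refine Set.indicator_of_notMem ?_ h
      intro hmem
      exact hne ((Set.mem_singleton_iff.mp (Set.mem_preimage.mp hmem)).symm)
    rw [h1, Set.indicator_of_mem (Set.mem_preimage.mpr (Set.mem_singleton _)) h]
  calc ∫⁻ ω, h ω ∂P
      = ∫⁻ ω, ∑ c ∈ @SimpleFunc.range Ω ℝ≥0∞ m s, (s ⁻¹' {c}).indicator h ω ∂P :=
        lintegral_congr hpt
    _ = ∑ c ∈ @SimpleFunc.range Ω ℝ≥0∞ m s, ∫⁻ ω, (s ⁻¹' {c}).indicator h ω ∂P :=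
        lintegral_finset_sum' _ (fun c _ => hh.indicator (hfib c))
    _ = ∑ c ∈ @SimpleFunc.range Ω ℝ≥0∞ m s, ∫⁻ ω in s ⁻¹' {c}, h ω ∂P :=
        Finset.sum_congr rfl fun c _ => lintegral_indicator (hfib c) h

lemma ofReal_exp_rpow_two (x : ℝ) :
    ENNReal.ofReal (Real.exp x) ^ (2:ℝ) = ENNReal.ofReal (Real.exp (2 * x)) := by
  rw [ENNReal.ofReal_rpow_of_pos (Real.exp_pos x), ← Real.exp_mul, mul_comm]

lemma ofReal_exp_rpow_half (x : ℝ) :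
    ENNReal.ofReal (Real.exp x) ^ ((1:ℝ)/2) = ENNReal.ofReal (Real.exp (x * (1/2))) := by
  rw [ENNReal.ofReal_rpow_of_pos (Real.exp_pos x), ← Real.exp_mul]

end IteratedMGFAux

open IteratedMGFAux

/-- Iterated MGF bound with constant parameters. -/
theorem iterated_mgf_bound
    {Ω : Type*} {m0 : MeasurableSpace Ω}
    (P : Measure Ω) [IsProbabilityMeasure P]
    (ℋ : Filtration ℕ m0)
    (V U X : ℕ → Ω → ℝ) (α σ ν : ℝ)
    (hα0 : 0 ≤ α) (hα1 : α < 1) (hσ : 0 < σ) (hν : 0 < ν)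
    (V0 : ℝ) (hV0 : ∀ ω, V 0 ω = V0)
    (hlink : ∀ t, ∀ᵐ ω ∂P,
      V (t+1) ω ≤ α * V t ω + U t ω * Real.sqrt (V t ω) + X t ω)
    (hVnonneg : ∀ t, ∀ᵐ ω ∂P, 0 ≤ V t ω)
    (hVmeas : ∀ t, StronglyMeasurable[ℋ t] (V t))
    (hUint : ∀ t (l : ℝ), Integrable (fun ω => Real.exp (l * U t ω)) P)
    (hU : ∀ t (l : ℝ),
      P[fun ω => Real.exp (l * U t ω) | ℋ t] ≤ᵐ[P] fun _ => Real.exp (l^2 * σ^2 / 2))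
    (hXnonneg : ∀ t, ∀ᵐ ω ∂P, 0 ≤ X t ω)
    (hXint : ∀ t (l : ℝ), 0 ≤ l → l ≤ 1/ν →
      Integrable (fun ω => Real.exp (l * X t ω)) P)
    (hX : ∀ t (l : ℝ), 0 ≤ l → l ≤ 1/ν →
      P[fun ω => Real.exp (l * X t ω) | ℋ t] ≤ᵐ[P] fun _ => Real.exp (l * ν)) :
    ∀ t : ℕ, 1 ≤ t → ∀ l : ℝ, 0 ≤ l → l ≤ min ((1 - α)/(2 * σ^2)) (1/(2 * ν)) →
      (∫ ω, Real.exp (l * V t ω) ∂P ≤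
        Real.exp (l * (((1 + α)/2)^t * V0 + ν * ∑ i ∈ Finset.range t, ((1 + α)/2)^i)))
      ∧ (∫ ω, Real.exp (l * V t ω) ∂P ≤
        Real.exp (l * (((1 + α)/2)^t * V0 + 2 * ν/(1 - α)))) := by
  -- basic measurability of U and X
  have hUmeas : ∀ t, AEMeasurable (U t) P := by
    intro t
    have h1 : AEMeasurable (fun ω => Real.exp (1 * U t ω)) P := (hUint t 1).aemeasurable
    have h2 : AEMeasurable (fun ω => Real.log (Real.exp (1 * U t ω))) P :=
      Real.measurable_log.comp_aemeasurable h1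
    simpa [Real.log_exp] using h2
  have hXmeas : ∀ t, AEMeasurable (X t) P := by
    intro t
    have h1 : AEMeasurable (fun ω => Real.exp ((1/ν) * X t ω)) P :=
      (hXint t (1/ν) (by positivity) le_rfl).aemeasurable
    have h2 : AEMeasurable (fun ω => ν * Real.log (Real.exp ((1/ν) * X t ω))) P :=
      (Real.measurable_log.comp_aemeasurable h1).const_mul ν
    have h3 : (fun ω => ν * Real.log (Real.exp ((1/ν) * X t ω))) = X t := by
      funext ω
      rw [Real.log_exp]
      field_simp
    rwa [h3] at h2
  -- the one-step inequality
  have key : ∀ t (l : ℝ), 0 ≤ l → l * σ^2 ≤ (1-α)/2 → 2*l ≤ 1/ν →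
      ∫⁻ ω, ENNReal.ofReal (Real.exp (l * V (t+1) ω)) ∂P ≤
        ENNReal.ofReal (Real.exp (l * ν)) *
          ∫⁻ ω, ENNReal.ofReal (Real.exp (l * ((1+α)/2) * V t ω)) ∂P := by
    intro t l hl0 hlσ hlν
    classical
    set Y : Ω → ℝ := fun ω => max (V t ω) 0 with hYdef
    have hY0 : ∀ ω, 0 ≤ Y ω := fun ω => le_max_right _ _
    have hYm : Measurable[ℋ t] Y := Measurable.max (hVmeas t).measurable measurable_const
    set g : Ω → ℝ≥0∞ := fun ω => ENNReal.ofReal (Y ω) with hgdef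
    have hgm : Measurable[ℋ t] g := ENNReal.measurable_ofReal.comp hYm
    have hgfin : ∀ ω, g ω ≠ ∞ := fun ω => ENNReal.ofReal_ne_top
    set sfn : ℕ → @SimpleFunc Ω (ℋ t) ℝ≥0∞ := fun n => @SimpleFunc.eapprox Ω (ℋ t) g n
      with hsfndef
    set Yn : ℕ → Ω → ℝ := fun n ω => ((sfn n) ω).toReal with hYndef
    have hfib : ∀ n (c : ℝ≥0∞), MeasurableSet[ℋ t] ((sfn n) ⁻¹' {c}) :=
      fun n c => @SimpleFunc.measurableSet_fiber Ω ℝ≥0∞ (ℋ t) (sfn n) c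
    have hsle : ∀ n ω, (sfn n) ω ≤ g ω := by
      intro n ω
      rw [← @SimpleFunc.iSup_eapprox_apply Ω (ℋ t) g hgm ω]
      exact le_iSup (fun n => (@SimpleFunc.eapprox Ω (ℋ t) g n) ω) n
    have hgtoReal : ∀ ω, (g ω).toReal = Y ω := fun ω => ENNReal.toReal_ofReal (hY0 ω)
    have hYnle : ∀ n ω, Yn n ω ≤ Y ω := by
      intro n ω
      rw [← hgtoReal ω]
      exact ENNReal.toReal_mono (hgfin ω) (hsle n ω)
    have hYn0 : ∀ n ω, 0 ≤ Yn n ω := fun n ω => ENNReal.toReal_nonneg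
    have htend : ∀ ω, Tendsto (fun n => Yn n ω) atTop (nhds (Y ω)) := by
      intro ω
      have h1 : Tendsto (fun n => (sfn n) ω) atTop (nhds (g ω)) := by
        rw [← @SimpleFunc.iSup_eapprox_apply Ω (ℋ t) g hgm ω]
        exact tendsto_atTop_iSup (fun i j hij => @SimpleFunc.monotone_eapprox Ω (ℋ t) g i j hij ω)
      have h2 := (ENNReal.tendsto_toReal (hgfin ω)).comp h1
      rwa [hgtoReal ω] at h2
    set fn : ℕ → Ω → ℝ≥0∞ := fun n ω =>
      ENNReal.ofReal (Real.exp (l*α*(Yn n ω) + l*Real.sqrt (Yn n ω) * U t ω + l * X t ω))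
      with hfndef
    have hYnm : ∀ n, Measurable (Yn n) := by
      intro n
      exact ENNReal.measurable_toReal.comp
        ((@SimpleFunc.measurable Ω ℝ≥0∞ (ℋ t) _ (sfn n)).mono (ℋ.le t) le_rfl)
    have hfnmeas : ∀ n, AEMeasurable (fn n) P := by
      intro n
      have h1 : Measurable (fun ω => l*α*Yn n ω) := (hYnm n).const_mul (l*α)
      have h2 : AEMeasurable (fun ω => l*Real.sqrt (Yn n ω) * U t ω) P :=
        (((Real.continuous_sqrt.measurable.comp (hYnm n)).const_mul l).aemeasurable).mul
          (hUmeas t)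
      have h3 : AEMeasurable (fun ω => l * X t ω) P := (hXmeas t).const_mul l
      exact ENNReal.measurable_ofReal.comp_aemeasurable
        (Real.measurable_exp.comp_aemeasurable ((h1.aemeasurable.add h2).add h3))
    -- the bound over each fiber
    have fiber_bound : ∀ n (c : ℝ≥0∞), c ∈ @SimpleFunc.range Ω ℝ≥0∞ (ℋ t) (sfn n) →
        ∫⁻ ω in (sfn n) ⁻¹' {c}, fn n ω ∂P
          ≤ ENNReal.ofReal (Real.exp (l * ((1+α)/2) * c.toReal + l * ν)) *
              P ((sfn n) ⁻¹' {c}) := by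
      intro n c _
      set B := (sfn n) ⁻¹' {c} with hBdef
      set v := c.toReal with hvdef
      have hv0 : 0 ≤ v := ENNReal.toReal_nonneg
      have hBm : MeasurableSet[ℋ t] B := hfib n c
      have hB0 : MeasurableSet B := ℋ.le t _ hBm
      have hYnv : ∀ ω ∈ B, Yn n ω = v := by
        intro ω hω
        have : (sfn n) ω = c := Set.mem_singleton_iff.mp (Set.mem_preimage.mp hω)
        rw [hYndef]; simp only [this]; rfl
      have hcongr : ∫⁻ ω in B, fn n ω ∂P
          = ∫⁻ ω in B, ENNReal.ofReal (Real.exp (l*α*v)) *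
              (ENNReal.ofReal (Real.exp (l*Real.sqrt v * U t ω)) *
                ENNReal.ofReal (Real.exp (l * X t ω))) ∂P := by
        refine setLIntegral_congr_fun hB0 (fun ω hω => ?_)
        rw [hfndef]
        simp only [hYnv ω hω]
        rw [← ENNReal.ofReal_mul (Real.exp_nonneg _), ← ENNReal.ofReal_mul (Real.exp_nonneg _),
          ← Real.exp_add, ← Real.exp_add]
        congr 2
        ring
      have hfU : AEMeasurable (fun ω => ENNReal.ofReal (Real.exp (l*Real.sqrt v * U t ω))) P :=
        ENNReal.measurable_ofReal.comp_aemeasurable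
          (Real.measurable_exp.comp_aemeasurable ((hUmeas t).const_mul (l*Real.sqrt v)))
      have hgX : AEMeasurable (fun ω => ENNReal.ofReal (Real.exp (l * X t ω))) P :=
        ENNReal.measurable_ofReal.comp_aemeasurable
          (Real.measurable_exp.comp_aemeasurable ((hXmeas t).const_mul l))
      have hconj : Real.HolderConjugate 2 2 := Real.HolderConjugate.two_two
      have hCS := ENNReal.lintegral_mul_le_Lp_mul_Lq (P.restrict B) hconj
        hfU.restrict hgX.restrict
      simp only [Pi.mul_apply] at hCS
      -- bound the two factors
      have hA : ∫⁻ ω in B, ENNReal.ofReal (Real.exp (l*Real.sqrt v * U t ω)) ^ (2:ℝ) ∂P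
          ≤ ENNReal.ofReal (Real.exp ((2*l*Real.sqrt v)^2 * σ^2/2)) * P B := by
        have heq : ∀ ω, ENNReal.ofReal (Real.exp (l*Real.sqrt v * U t ω)) ^ (2:ℝ)
            = ENNReal.ofReal (Real.exp (2*l*Real.sqrt v * U t ω)) := by
          intro ω
          rw [ofReal_exp_rpow_two]
          congr 2
          ring
        simp only [heq]
        exact setLIntegral_le_of_condexp_le (ℋ.le t)
          (fun ω => (Real.exp_nonneg _)) (hUint t (2*l*Real.sqrt v))
          (Real.exp_nonneg _) (hU t (2*l*Real.sqrt v)) hBm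
      have hB2 : ∫⁻ ω in B, ENNReal.ofReal (Real.exp (l * X t ω)) ^ (2:ℝ) ∂P
          ≤ ENNReal.ofReal (Real.exp (2*l * ν)) * P B := by
        have heq : ∀ ω, ENNReal.ofReal (Real.exp (l * X t ω)) ^ (2:ℝ)
            = ENNReal.ofReal (Real.exp (2*l * X t ω)) := by
          intro ω
          rw [ofReal_exp_rpow_two]
          congr 2
          ring
        simp only [heq]
        exact setLIntegral_le_of_condexp_le (ℋ.le t)
          (fun ω => (Real.exp_nonneg _)) (hXint t (2*l) (by linarith) hlν)
          (Real.exp_nonneg _) (hX t (2*l) (by linarith) hlν) hBm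
      calc ∫⁻ ω in B, fn n ω ∂P
          = ENNReal.ofReal (Real.exp (l*α*v)) *
              ∫⁻ ω in B, ENNReal.ofReal (Real.exp (l*Real.sqrt v * U t ω)) *
                ENNReal.ofReal (Real.exp (l * X t ω)) ∂P := by
            rw [hcongr, lintegral_const_mul' _ _ ENNReal.ofReal_ne_top]
        _ ≤ ENNReal.ofReal (Real.exp (l*α*v)) *
              ((∫⁻ ω in B, ENNReal.ofReal (Real.exp (l*Real.sqrt v * U t ω)) ^ (2:ℝ) ∂P) ^ ((1:ℝ)/2) *
               (∫⁻ ω in B, ENNReal.ofReal (Real.exp (l * X t ω)) ^ (2:ℝ) ∂P) ^ ((1:ℝ)/2)) :=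
            mul_le_mul_right hCS _
        _ ≤ ENNReal.ofReal (Real.exp (l*α*v)) *
              ((ENNReal.ofReal (Real.exp ((2*l*Real.sqrt v)^2 * σ^2/2)) * P B) ^ ((1:ℝ)/2) *
               (ENNReal.ofReal (Real.exp (2*l * ν)) * P B) ^ ((1:ℝ)/2)) :=
            mul_le_mul_right (mul_le_mul'
              (ENNReal.rpow_le_rpow hA (by norm_num))
              (ENNReal.rpow_le_rpow hB2 (by norm_num))) _
        _ = ENNReal.ofReal (Real.exp (l*α*v + ((2*l*Real.sqrt v)^2 * σ^2/2 * (1/2)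
              + 2*l*ν * (1/2)))) * P B := by
            rw [ENNReal.mul_rpow_of_nonneg _ _ (by norm_num : (0:ℝ) ≤ 1/2),
              ENNReal.mul_rpow_of_nonneg _ _ (by norm_num : (0:ℝ) ≤ 1/2),
              mul_mul_mul_comm,
              ← ENNReal.rpow_add_of_nonneg (x := P B) ((1:ℝ)/2) ((1:ℝ)/2)
                (by norm_num) (by norm_num),
              show (1:ℝ)/2 + 1/2 = 1 by norm_num, ENNReal.rpow_one,
              ofReal_exp_rpow_half, ofReal_exp_rpow_half,
              ← ENNReal.ofReal_mul (Real.exp_nonneg _), ← Real.exp_add,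
              ← mul_assoc, ← ENNReal.ofReal_mul (Real.exp_nonneg _), ← Real.exp_add]
        _ ≤ ENNReal.ofReal (Real.exp (l * ((1+α)/2) * v + l * ν)) * P B := by
            refine mul_le_mul_left (ENNReal.ofReal_le_ofReal (Real.exp_le_exp.mpr ?_)) _
            have hsv : Real.sqrt v ^ 2 = v := Real.sq_sqrt hv0
            have hkey2 : l*v*(l*σ^2) ≤ l*v*((1-α)/2) :=
              mul_le_mul_of_nonneg_left hlσ (mul_nonneg hl0 hv0)
            have h3 : (2*l*Real.sqrt v)^2 * σ^2/2 * (1/2) = l*v*(l*σ^2) := by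
              linear_combination (l^2*σ^2) * hsv
            linarith [hkey2, h3]
    -- the bound for each approximation level
    have hfn_bound : ∀ n, ∫⁻ ω, fn n ω ∂P ≤
        ENNReal.ofReal (Real.exp (l*ν)) *
          ∫⁻ ω, ENNReal.ofReal (Real.exp (l * ((1+α)/2) * Y ω)) ∂P := by
      intro n
      have hgnmeas : AEMeasurable (fun ω => ENNReal.ofReal (Real.exp (l * ((1+α)/2) * Yn n ω))) P :=
        (ENNReal.measurable_ofReal.comp
          (Real.measurable_exp.comp ((hYnm n).const_mul (l * ((1+α)/2))))).aemeasurable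
      calc ∫⁻ ω, fn n ω ∂P
          = ∑ c ∈ @SimpleFunc.range Ω ℝ≥0∞ (ℋ t) (sfn n), ∫⁻ ω in (sfn n) ⁻¹' {c}, fn n ω ∂P :=
            lintegral_eq_sum_fibers (ℋ.le t) (sfn n) (hfnmeas n)
        _ ≤ ∑ c ∈ @SimpleFunc.range Ω ℝ≥0∞ (ℋ t) (sfn n),
              ENNReal.ofReal (Real.exp (l * ((1+α)/2) * c.toReal + l * ν)) *
              P ((sfn n) ⁻¹' {c}) :=
            Finset.sum_le_sum (fiber_bound n)
        _ = ENNReal.ofReal (Real.exp (l*ν)) *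
              ∑ c ∈ @SimpleFunc.range Ω ℝ≥0∞ (ℋ t) (sfn n),
                ENNReal.ofReal (Real.exp (l * ((1+α)/2) * c.toReal)) *
                P ((sfn n) ⁻¹' {c}) := by
            rw [Finset.mul_sum]
            refine Finset.sum_congr rfl fun c _ => ?_
            rw [← mul_assoc, ← ENNReal.ofReal_mul (Real.exp_nonneg _), ← Real.exp_add, add_comm]
        _ = ENNReal.ofReal (Real.exp (l*ν)) *
              ∫⁻ ω, ENNReal.ofReal (Real.exp (l * ((1+α)/2) * Yn n ω)) ∂P := by
            congr 1
            rw [lintegral_eq_sum_fibers (ℋ.le t) (sfn n) hgnmeas]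
            refine Finset.sum_congr rfl fun c _ => ?_
            rw [setLIntegral_congr_fun (ℋ.le t _ (hfib n c))
              (fun ω hω => ?_), setLIntegral_const]
            have : (sfn n) ω = c := Set.mem_singleton_iff.mp (Set.mem_preimage.mp hω)
            rw [hYndef]; simp only [this]
        _ ≤ ENNReal.ofReal (Real.exp (l*ν)) *
              ∫⁻ ω, ENNReal.ofReal (Real.exp (l * ((1+α)/2) * Y ω)) ∂P := by
            refine mul_le_mul_right (lintegral_mono fun ω => ?_) _
            refine ENNReal.ofReal_le_ofReal (Real.exp_le_exp.mpr ?_)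
            refine mul_le_mul_of_nonneg_left (hYnle n ω) ?_
            have : (0:ℝ) ≤ (1+α)/2 := by linarith
            exact mul_nonneg hl0 this
    -- pointwise limits and Fatou
    have hptlim : ∀ ω, Tendsto (fun n => fn n ω) atTop
        (nhds (ENNReal.ofReal (Real.exp (l*α*Y ω + l*Real.sqrt (Y ω) * U t ω + l * X t ω)))) := by
      intro ω
      have h1 : Tendsto (fun n => l*α*Yn n ω + l*Real.sqrt (Yn n ω) * U t ω + l * X t ω) atTop
          (nhds (l*α*Y ω + l*Real.sqrt (Y ω) * U t ω + l * X t ω)) := by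
        refine Tendsto.add (Tendsto.add ?_ ?_) tendsto_const_nhds
        · exact (htend ω).const_mul (l*α)
        · exact (((Real.continuous_sqrt.tendsto _).comp (htend ω)).const_mul l).mul_const (U t ω)
      exact (ENNReal.continuous_ofReal.tendsto _).comp ((Real.continuous_exp.tendsto _).comp h1)
    have hae2 : ∀ᵐ ω ∂P, ENNReal.ofReal (Real.exp (l * V (t+1) ω)) ≤
        liminf (fun n => fn n ω) atTop := by
      filter_upwards [hlink t, hVnonneg t] with ω h1 h2
      rw [(hptlim ω).liminf_eq]
      have hYV : Y ω = V t ω := max_eq_left h2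
      refine ENNReal.ofReal_le_ofReal (Real.exp_le_exp.mpr ?_)
      rw [hYV]
      calc l * V (t+1) ω ≤ l * (α * V t ω + U t ω * Real.sqrt (V t ω) + X t ω) :=
            mul_le_mul_of_nonneg_left h1 hl0
        _ = l*α*V t ω + l*Real.sqrt (V t ω) * U t ω + l * X t ω := by ring
    calc ∫⁻ ω, ENNReal.ofReal (Real.exp (l * V (t+1) ω)) ∂P
        ≤ ∫⁻ ω, liminf (fun n => fn n ω) atTop ∂P := lintegral_mono_ae hae2
      _ ≤ liminf (fun n => ∫⁻ ω, fn n ω ∂P) atTop := lintegral_liminf_le' hfnmeas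
      _ ≤ ENNReal.ofReal (Real.exp (l*ν)) *
            ∫⁻ ω, ENNReal.ofReal (Real.exp (l * ((1+α)/2) * Y ω)) ∂P := by
          refine le_trans (liminf_le_liminf (Eventually.of_forall hfn_bound)) ?_
          rw [liminf_const]
      _ = ENNReal.ofReal (Real.exp (l*ν)) *
            ∫⁻ ω, ENNReal.ofReal (Real.exp (l * ((1+α)/2) * V t ω)) ∂P := by
          congr 1
          refine lintegral_congr_ae ?_
          filter_upwards [hVnonneg t] with ω h2
          rw [hYdef]
          simp only [max_eq_left h2]
  -- the iterated bound
  have claim : ∀ (t : ℕ) (l : ℝ), 0 ≤ l → l ≤ min ((1 - α)/(2 * σ^2)) (1/(2 * ν)) →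
      ∫⁻ ω, ENNReal.ofReal (Real.exp (l * V t ω)) ∂P ≤
        ENNReal.ofReal (Real.exp (l * (((1 + α)/2)^t * V0 +
          ν * ∑ i ∈ Finset.range t, ((1 + α)/2)^i))) := by
    intro t
    induction t with
    | zero =>
      intro l hl0 hlmax
      have : ∀ ω, Real.exp (l * V 0 ω) = Real.exp (l * V0) := fun ω => by rw [hV0]
      simp only [this, lintegral_const, measure_univ, mul_one]
      exact ENNReal.ofReal_le_ofReal (Real.exp_le_exp.mpr (by simp))
    | succ t ih =>
      intro l hl0 hlmax
      have hσ2 : (0:ℝ) < σ^2 := by positivity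
      have hlσ : l * σ^2 ≤ (1-α)/2 := by
        have h1 : l ≤ (1-α)/(2*σ^2) := le_trans hlmax (min_le_left _ _)
        have h2 := mul_le_mul_of_nonneg_right h1 hσ2.le
        calc l * σ^2 ≤ (1-α)/(2*σ^2) * σ^2 := h2
          _ = (1-α)/2 := by field_simp
      have hlν : 2*l ≤ 1/ν := by
        have h1 : l ≤ 1/(2*ν) := le_trans hlmax (min_le_right _ _)
        have h2 : 2*(1/(2*ν)) = 1/ν := by field_simp
        linarith
      have hβ01 : (0:ℝ) ≤ (1+α)/2 := by linarith
      have hβle1 : (1+α)/2 ≤ 1 := by linarith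
      have hIH := ih (l * ((1+α)/2)) (mul_nonneg hl0 hβ01)
        (le_trans (mul_le_of_le_one_right hl0 hβle1) hlmax)
      calc ∫⁻ ω, ENNReal.ofReal (Real.exp (l * V (t+1) ω)) ∂P
          ≤ ENNReal.ofReal (Real.exp (l * ν)) *
              ∫⁻ ω, ENNReal.ofReal (Real.exp (l * ((1+α)/2) * V t ω)) ∂P :=
            key t l hl0 hlσ hlν
        _ ≤ ENNReal.ofReal (Real.exp (l * ν)) *
              ENNReal.ofReal (Real.exp (l * ((1 + α)/2) * (((1 + α)/2)^t * V0 +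
                ν * ∑ i ∈ Finset.range t, ((1 + α)/2)^i))) :=
            mul_le_mul_right hIH _
        _ = ENNReal.ofReal (Real.exp (l * (((1 + α)/2)^(t+1) * V0 +
              ν * ∑ i ∈ Finset.range (t+1), ((1 + α)/2)^i))) := by
            rw [← ENNReal.ofReal_mul (Real.exp_nonneg _), ← Real.exp_add]
            congr 2
            rw [Finset.sum_range_succ']
            simp only [pow_succ, pow_zero]
            rw [← Finset.sum_mul]
            ring
  -- conclude
  intro t _ l hl0 hlmax
  have hmeasV : AEStronglyMeasurable (fun ω => Real.exp (l * V t ω)) P :=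
    (Real.measurable_exp.comp
      (measurable_const.mul ((hVmeas t).mono (ℋ.le t)).measurable)).aestronglyMeasurable
  have hintrepr : ∫ ω, Real.exp (l * V t ω) ∂P =
      (∫⁻ ω, ENNReal.ofReal (Real.exp (l * V t ω)) ∂P).toReal :=
    integral_eq_lintegral_of_nonneg_ae (Eventually.of_forall fun ω => Real.exp_nonneg _) hmeasV
  have hcl := claim t l hl0 hlmax
  have hfirst : ∫ ω, Real.exp (l * V t ω) ∂P ≤
      Real.exp (l * (((1 + α)/2)^t * V0 + ν * ∑ i ∈ Finset.range t, ((1 + α)/2)^i)) := by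
    rw [hintrepr]
    calc (∫⁻ ω, ENNReal.ofReal (Real.exp (l * V t ω)) ∂P).toReal
        ≤ (ENNReal.ofReal (Real.exp (l * (((1 + α)/2)^t * V0 +
            ν * ∑ i ∈ Finset.range t, ((1 + α)/2)^i)))).toReal :=
          ENNReal.toReal_mono ENNReal.ofReal_ne_top hcl
      _ = Real.exp (l * (((1 + α)/2)^t * V0 + ν * ∑ i ∈ Finset.range t, ((1 + α)/2)^i)) :=
          ENNReal.toReal_ofReal (Real.exp_nonneg _)
  refine ⟨hfirst, le_trans hfirst (Real.exp_le_exp.mpr ?_)⟩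
  refine mul_le_mul_of_nonneg_left (add_le_add_right ?_ _) hl0
  -- ν * geometric sum ≤ 2ν/(1-α)
  have hβ0 : (0:ℝ) ≤ (1+α)/2 := by linarith
  have h1β : (0:ℝ) < 1 - (1+α)/2 := by linarith
  have hgs := geom_sum_mul ((1+α)/2) t
  have hpow0 : (0:ℝ) ≤ ((1+α)/2)^t := pow_nonneg hβ0 t
  have hS : (∑ i ∈ Finset.range t, ((1 + α)/2)^i) * (1 - (1+α)/2) ≤ 1 := by nlinarith
  have hS2 : (∑ i ∈ Finset.range t, ((1 + α)/2)^i) ≤ 2/(1-α) := by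
    rw [← le_div_iff₀ h1β] at hS
    calc (∑ i ∈ Finset.range t, ((1 + α)/2)^i) ≤ 1/(1 - (1+α)/2) := hS
      _ = 2/(1-α) := by
          rw [div_eq_div_iff h1β.ne' (show (1:ℝ)-α ≠ 0 by intro h; linarith [h])]
          ring
  calc ν * ∑ i ∈ Finset.range t, ((1 + α)/2)^i ≤ ν * (2/(1-α)) :=
        mul_le_mul_of_nonneg_left hS2 hν.le
    _ = 2*ν/(1-α) := by ring
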